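/- Let L_H satisfy (1−ε)L_G − εγI ⪯ L_H ⪯ (1+ε)L_G + εγI with 0 ≤ ε < 1 and γ ≥ 0. For λ > 0 let f̂ = (λL_G + I)^{-1} y and f̃ = (λL_H + I)^{-1} y. Then ‖f̃ − f̂‖² ≤ (ε²/(1−ε)) (1/4 + λγ) (λ f̂^T L_G f̂ + λγ ‖f̂‖²). -/

import Mathlib

/-!
Put `δ = f̃ - f̂`. Subtracting the normal equations gives `(λ L_H + I) δ = D f̂` with
`D = λ (L_G - L_H)`, so `‖δ‖² + λ δᵀ L_H δ = δᵀ D f̂`. The sparsifier condition says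
`-C ⪯ D ⪯ C` for `C = ε (λ L_G + λγ I)`, whence `(δᵀ D f̂)² ≤ (δᵀ C δ)(f̂ᵀ C f̂)`, and the lower
sparsifier bound controls `δᵀ C δ` by `ε/(1-ε) (λ δᵀ L_H δ + λγ ‖δ‖²)`. This leaves
`(a + b)² ≤ K (b + λγ a)` with `a = ‖δ‖²`, which forces `a ≤ K (1/4 + λγ)`.
-/

open Matrix

variable {ι : Type*}

lemma Matrix.PosSemidef.smul_add_one_posDef [DecidableEq ι] {L : Matrix ι ι ℝ}
    (hL : L.PosSemidef) {lam : ℝ} (hlam : 0 ≤ lam) : (lam • L + 1).PosDef :=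
  PosDef.posSemidef_add (hL.smul hlam) PosDef.one

variable [Fintype ι]

lemma dotProduct_self_nonneg {R : Type*} [CommRing R] [LinearOrder R] [IsStrictOrderedRing R]
    (x : ι → R) : 0 ≤ x ⬝ᵥ x :=
  Finset.sum_nonneg fun i _ => mul_self_nonneg (x i)

lemma Matrix.IsHermitian.dotProduct_mulVec_comm {M : Matrix ι ι ℝ} (hM : M.IsHermitian)
    (x z : ι → ℝ) : x ⬝ᵥ (M *ᵥ z) = z ⬝ᵥ (M *ᵥ x) := by
  rw [dotProduct_mulVec, ← mulVec_transpose, ← conjTranspose_eq_transpose_of_trivial, hM.eq,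
    dotProduct_comm]

lemma Matrix.PosSemidef.dotProduct_mulVec_self_nonneg {M : Matrix ι ι ℝ} (hM : M.PosSemidef)
    (x : ι → ℝ) : 0 ≤ x ⬝ᵥ (M *ᵥ x) := by
  simpa using hM.dotProduct_mulVec_nonneg x

lemma isHermitian_of_posSemidef_sub_of_posSemidef_add {C D : Matrix ι ι ℝ}
    (hsub : (C - D).PosSemidef) (hadd : (C + D).PosSemidef) : D.IsHermitian := by
  have h := hadd.1.sub hsub.1
  rw [add_sub_sub_cancel, ← two_smul ℝ] at h
  simpa [IsHermitian, conjTranspose_smul] using h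

/-- For every `t`, `(t x - z)ᵀ(C + D)(t x - z) + (t x + z)ᵀ(C - D)(t x + z)
= 2 (t² xᵀCx - 2 t xᵀDz + zᵀCz) ≥ 0`; the discriminant of this quadratic is `≤ 0`. -/
theorem sq_dotProduct_mulVec_le_of_posSemidef_sub_of_posSemidef_add {C D : Matrix ι ι ℝ}
    (hsub : (C - D).PosSemidef) (hadd : (C + D).PosSemidef) (x z : ι → ℝ) :
    (x ⬝ᵥ (D *ᵥ z)) ^ 2 ≤ (x ⬝ᵥ (C *ᵥ x)) * (z ⬝ᵥ (C *ᵥ z)) := by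
  have hD := isHermitian_of_posSemidef_sub_of_posSemidef_add hsub hadd
  have hquad : ∀ t : ℝ, 0 ≤ (x ⬝ᵥ (C *ᵥ x)) * (t * t) + (-2 * (x ⬝ᵥ (D *ᵥ z))) * t
      + z ⬝ᵥ (C *ᵥ z) := by
    intro t
    have h₁ := hadd.dotProduct_mulVec_self_nonneg (t • x - z)
    have h₂ := hsub.dotProduct_mulVec_self_nonneg (t • x + z)
    simp only [add_mulVec, sub_mulVec, mulVec_add, mulVec_sub, mulVec_smul, dotProduct_add,
      dotProduct_sub, add_dotProduct, sub_dotProduct, dotProduct_smul, smul_dotProduct,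
      smul_eq_mul, hD.dotProduct_mulVec_comm z x] at h₁ h₂
    nlinarith
  have := discrim_le_zero hquad
  rw [discrim] at this
  nlinarith

theorem le_mul_one_div_four_add_of_sq_add_le {a b c K : ℝ} (ha : 0 ≤ a) (hb : 0 ≤ b)
    (hc : 0 ≤ c) (hK : 0 ≤ K) (h : (a + b) ^ 2 ≤ K * (b + c * a)) : a ≤ K * (1 / 4 + c) := by
  rcases le_or_gt (2 * a) K with hsmall | hlarge
  · rcases hK.eq_or_lt with rfl | hKpos
    · linarith
    have : a * (1 - c) ≤ K / 4 := by
      refine le_of_mul_le_mul_left ?_ hKpos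
      nlinarith [sq_nonneg (a + b - K / 2)]
    nlinarith
  · have : a ^ 2 ≤ K * c * a := by nlinarith [mul_nonneg hb (by linarith : 0 ≤ 2 * a - K)]
    nlinarith

section LaplacianSmoothing

variable [DecidableEq ι] {LG LH : Matrix ι ι ℝ} {ε γ lam : ℝ}

lemma Matrix.PosDef.mulVec_inv_mulVec {A : Matrix ι ι ℝ} (hA : A.PosDef) (y : ι → ℝ) :
    A *ᵥ (A⁻¹ *ᵥ y) = y := by
  rw [mulVec_mulVec, mul_nonsing_inv _ ((isUnit_iff_isUnit_det A).mp hA.isUnit), one_mulVec]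

/-- With `C = ε (λ L_G + λγ I)` and `D = λ (L_G - L_H)`, the sparsifier condition says
exactly `-C ⪯ D ⪯ C`. -/
theorem sq_dotProduct_mulVec_sub_le_of_sparsifier (hlam : 0 ≤ lam)
    (hlow : (LH - ((1 - ε) • LG - (ε * γ) • (1 : Matrix ι ι ℝ))).PosSemidef)
    (hup : (((1 + ε) • LG + (ε * γ) • (1 : Matrix ι ι ℝ)) - LH).PosSemidef) (x z : ι → ℝ) :
    (x ⬝ᵥ ((lam • (LG - LH)) *ᵥ z)) ^ 2 ≤
      ε ^ 2 * (lam * (x ⬝ᵥ (LG *ᵥ x)) + lam * γ * (x ⬝ᵥ x)) *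
        (lam * (z ⬝ᵥ (LG *ᵥ z)) + lam * γ * (z ⬝ᵥ z)) := by
  set C := ε • (lam • LG + (lam * γ) • (1 : Matrix ι ι ℝ))
  have hsub : (C - lam • (LG - LH)).PosSemidef := by
    convert hlow.smul hlam using 1
    module
  have hadd : (C + lam • (LG - LH)).PosSemidef := by
    convert hup.smul hlam using 1
    module
  have hC : ∀ v : ι → ℝ, v ⬝ᵥ (C *ᵥ v) = ε * (lam * (v ⬝ᵥ (LG *ᵥ v)) + lam * γ * (v ⬝ᵥ v)) := by
    intro v
    simp only [C, smul_mulVec, add_mulVec, one_mulVec, dotProduct_smul, dotProduct_add,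
      smul_eq_mul]
  calc _ ≤ (x ⬝ᵥ (C *ᵥ x)) * (z ⬝ᵥ (C *ᵥ z)) :=
        sq_dotProduct_mulVec_le_of_posSemidef_sub_of_posSemidef_add hsub hadd x z
    _ = _ := by rw [hC, hC]; ring

theorem one_sub_mul_energy_le_of_sparsifier
    (hlow : (LH - ((1 - ε) • LG - (ε * γ) • (1 : Matrix ι ι ℝ))).PosSemidef) (x : ι → ℝ) :
    (1 - ε) * (x ⬝ᵥ (LG *ᵥ x) + γ * (x ⬝ᵥ x)) ≤ x ⬝ᵥ (LH *ᵥ x) + γ * (x ⬝ᵥ x) := by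
  have h := hlow.dotProduct_mulVec_self_nonneg x
  simp only [sub_mulVec, smul_mulVec, one_mulVec, dotProduct_sub, dotProduct_smul,
    smul_eq_mul] at h
  nlinarith

theorem sq_smoothing_error_le_of_sparsifier (hlam : 0 ≤ lam)
    (hlow : (LH - ((1 - ε) • LG - (ε * γ) • (1 : Matrix ι ι ℝ))).PosSemidef)
    (hup : (((1 + ε) • LG + (ε * γ) • (1 : Matrix ι ι ℝ)) - LH).PosSemidef) {f g : ι → ℝ}
    (hfg : (lam • LH + 1) *ᵥ g = (lam • LG + 1) *ᵥ f) :
    ((g - f) ⬝ᵥ (g - f) + lam * ((g - f) ⬝ᵥ (LH *ᵥ (g - f)))) ^ 2 ≤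
      ε ^ 2 * (lam * ((g - f) ⬝ᵥ (LG *ᵥ (g - f))) + lam * γ * ((g - f) ⬝ᵥ (g - f))) *
        (lam * (f ⬝ᵥ (LG *ᵥ f)) + lam * γ * (f ⬝ᵥ f)) := by
  have hres : (lam • LH + 1) *ᵥ (g - f) = (lam • (LG - LH)) *ᵥ f := by
    rw [mulVec_sub, hfg, ← sub_mulVec]
    congr 1
    module
  have hquad : (g - f) ⬝ᵥ ((lam • LH + 1) *ᵥ (g - f)) =
      (g - f) ⬝ᵥ (g - f) + lam * ((g - f) ⬝ᵥ (LH *ᵥ (g - f))) := by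
    rw [add_mulVec, one_mulVec, smul_mulVec, dotProduct_add, dotProduct_smul, smul_eq_mul,
      add_comm]
  rw [← hquad, hres]
  exact sq_dotProduct_mulVec_sub_le_of_sparsifier hlam hlow hup _ _

end LaplacianSmoothing

theorem stmt_6_general (n : ℕ) (LG LH : Matrix (Fin n) (Fin n) ℝ)
    (hG : LG.PosSemidef) (hH : LH.PosSemidef) (ε γ lam : ℝ)
    (hε1 : ε < 1) (hγ : 0 ≤ γ) (hlam : 0 < lam)
    (hlow : (LH - ((1 - ε) • LG - (ε * γ) • (1 : Matrix (Fin n) (Fin n) ℝ))).PosSemidef)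
    (hup : (((1 + ε) • LG + (ε * γ) • (1 : Matrix (Fin n) (Fin n) ℝ)) - LH).PosSemidef)
    (y fhat ftil : Fin n → ℝ)
    (hfhat : fhat = (lam • LG + (1 : Matrix (Fin n) (Fin n) ℝ))⁻¹ *ᵥ y)
    (hftil : ftil = (lam • LH + (1 : Matrix (Fin n) (Fin n) ℝ))⁻¹ *ᵥ y) :
    (ftil - fhat) ⬝ᵥ (ftil - fhat) ≤
      ε ^ 2 / (1 - ε) * (1 / 4 + lam * γ) *
        (lam * (fhat ⬝ᵥ (LG *ᵥ fhat)) + lam * γ * (fhat ⬝ᵥ fhat)) := by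
  have hsolve : (lam • LH + 1) *ᵥ ftil = (lam • LG + 1) *ᵥ fhat := by
    rw [hftil, hfhat, (hH.smul_add_one_posDef hlam.le).mulVec_inv_mulVec,
      (hG.smul_add_one_posDef hlam.le).mulVec_inv_mulVec]
  have hbilin := sq_smoothing_error_le_of_sparsifier hlam.le hlow hup hsolve
  have hlower := one_sub_mul_energy_le_of_sparsifier hlow (ftil - fhat)
  set δ := ftil - fhat
  set m := lam * (fhat ⬝ᵥ (LG *ᵥ fhat)) + lam * γ * (fhat ⬝ᵥ fhat)
  have hm : 0 ≤ m := by
    have := hG.dotProduct_mulVec_self_nonneg fhat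
    have := dotProduct_self_nonneg fhat
    positivity
  have hε : 0 < 1 - ε := by linarith
  have hcomb : (δ ⬝ᵥ δ + lam * (δ ⬝ᵥ (LH *ᵥ δ))) ^ 2 ≤
      ε ^ 2 / (1 - ε) * m * (lam * (δ ⬝ᵥ (LH *ᵥ δ)) + lam * γ * (δ ⬝ᵥ δ)) := by
    refine hbilin.trans ?_
    rw [div_mul_eq_mul_div, div_mul_eq_mul_div, le_div_iff₀ hε]
    have := mul_le_mul_of_nonneg_left hlower (mul_nonneg (mul_nonneg (sq_nonneg ε) hm) hlam.le)
    linarith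
  have := le_mul_one_div_four_add_of_sq_add_le (dotProduct_self_nonneg δ)
    (mul_nonneg hlam.le (hH.dotProduct_mulVec_self_nonneg δ)) (mul_nonneg hlam.le hγ)
    (by positivity) hcomb
  linarith

/-- If `(1−ε)L_G − εγI ⪯ L_H ⪯ (1+ε)L_G + εγI` with `0 ≤ ε < 1`, `γ ≥ 0` and
`λ > 0`, and `f̂ = (λL_G + I)⁻¹ y`, `f̃ = (λL_H + I)⁻¹ y`, then
`‖f̃ − f̂‖² ≤ (ε²/(1−ε)) (1/4 + λγ) (λ f̂ᵀ L_G f̂ + λγ ‖f̂‖²)`. -/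
theorem stmt_6 (n : ℕ) (LG LH : Matrix (Fin n) (Fin n) ℝ)
    (hG : LG.PosSemidef) (hH : LH.PosSemidef) (ε γ lam : ℝ)
    (hε0 : 0 ≤ ε) (hε1 : ε < 1) (hγ : 0 ≤ γ) (hlam : 0 < lam)
    (hlow : (LH - ((1 - ε) • LG - (ε * γ) • (1 : Matrix (Fin n) (Fin n) ℝ))).PosSemidef)
    (hup : (((1 + ε) • LG + (ε * γ) • (1 : Matrix (Fin n) (Fin n) ℝ)) - LH).PosSemidef)
    (y fhat ftil : Fin n → ℝ)
    (hfhat : fhat = (lam • LG + (1 : Matrix (Fin n) (Fin n) ℝ))⁻¹ *ᵥ y)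
    (hftil : ftil = (lam • LH + (1 : Matrix (Fin n) (Fin n) ℝ))⁻¹ *ᵥ y) :
    (ftil - fhat) ⬝ᵥ (ftil - fhat) ≤
      ε ^ 2 / (1 - ε) * (1 / 4 + lam * γ) *
        (lam * (fhat ⬝ᵥ (LG *ᵥ fhat)) + lam * γ * (fhat ⬝ᵥ fhat)) :=
  stmt_6_general n LG LH hG hH ε γ lam hε1 hγ hlam hlow hup y fhat ftil hfhat hftil
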